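/- For positive integers ℓ < n and indeterminates x_1,...,x_n, one has binom(n-1, ℓ-1) * (x_1+...+x_n)^{n-ℓ} = sum over set partitions π of {1,...,n} with exactly ℓ blocks of the product over blocks B of (sum_{b in B} x_b)^{|B|-1}. -/

import Mathlib

/-!
Mark every block with a new variable `y`. Over all set partitions of `U`, the sum of
`∏_B y (∑_{b∈B} x_b)^{|B|-1}` is `y (y + ∑_{b∈U} x_b)^{|U|-1}`, and the theorem is its
coefficient of `y^ℓ`. Splitting off the block `{v} ∪ T` of a fixed element `v` reduces this, by
strong induction on `U`, to Hurwitz's form of Abel's identity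
`∑_{T ⊆ S} (x + ∑_T a)^{|T|} · y (y + ∑_{S∖T} a)^{|S∖T|-1} = (x + y + ∑_S a)^{|S|}`.
Viewed as polynomials in `x`, the two sides of Hurwitz's identity have equal derivatives by
induction on `S`, and both vanish at `x = -(y + ∑_S a)`: there the left side is an alternating
sum over the subsets `T ⊆ S` of a polynomial of degree `< |S|` in `∑_T a`.
-/

open Finset

/-- `P` is a set partition of the finset `S`: its parts are nonempty, pairwise
disjoint, and their union is `S`. -/
abbrev IsSetPartition {α : Type*} [DecidableEq α] (S : Finset α)
    (P : Finset (Finset α)) : Prop :=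
  (∀ B ∈ P, B.Nonempty) ∧ (∀ B ∈ P, ∀ B' ∈ P, B ≠ B' → Disjoint B B') ∧
    P.sup id = S

/-- The finset of all set partitions of a finset `S` in a finite type. -/
def partitionsOf {α : Type*} [Fintype α] [DecidableEq α] (S : Finset α) :
    Finset (Finset (Finset α)) :=
  Finset.univ.filter (IsSetPartition S)

open Polynomial

instance Polynomial.instIsAddTorsionFree {R : Type*} [Semiring R] [IsAddTorsionFree R] :
    IsAddTorsionFree R[X] where
  nsmul_right_injective _ hn _ _ h :=
    Polynomial.ext fun k => IsAddTorsionFree.nsmul_right_injective hn <| by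
      simpa only [coeff_smul] using congrArg (coeff · k) h

namespace Polynomial

theorem eq_of_derivative_eq_of_eval_eq {R : Type*} [CommRing R] [IsAddTorsionFree R]
    {p q : R[X]} (c : R) (hd : derivative p = derivative q) (he : p.eval c = q.eval c) :
    p = q := by
  have hC := eq_C_of_derivative_eq_zero (p := p - q) (by rw [derivative_sub, hd, sub_self])
  have h0 : (p - q).coeff 0 = 0 := by
    simpa [he] using (congrArg (eval c) hC).symm
  rwa [h0, C_0, sub_eq_zero] at hC

end Polynomial

section Powerset

variable {α : Type*} [DecidableEq α]

theorem Finset.sum_powerset_card_nsmul {M : Type*} [AddCommMonoid M] (S : Finset α)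
    (f : Finset α → M) :
    ∑ T ∈ S.powerset, T.card • f T =
      ∑ w ∈ S, ∑ T ∈ (S.erase w).powerset, f (insert w T) := by
  calc ∑ T ∈ S.powerset, T.card • f T
      = ∑ T ∈ S.powerset, ∑ _w ∈ T, f T := by simp only [sum_const]
    _ = ∑ w ∈ S, ∑ T ∈ S.powerset with w ∈ T, f T :=
        sum_comm' fun T w => by
          simp only [mem_filter, mem_powerset]
          exact ⟨fun h => ⟨⟨h.1, h.2⟩, h.1 h.2⟩, fun h => ⟨h.1.1, h.1.2⟩⟩
    _ = _ := sum_congr rfl fun w hw => by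
        conv_lhs => rw [sum_filter, ← insert_erase hw, sum_powerset_insert (notMem_erase w S)]
        simp only [mem_insert_self, if_true]
        rw [sum_eq_zero fun T hT => if_neg fun h => by simpa using mem_powerset.1 hT h, zero_add]

theorem Finset.sum_powerset_neg_one_pow_card_mul_pow_eq_zero {R : Type*} [CommRing R]
    (a : α → R) (c : R) {S : Finset α} {m : ℕ} (hm : m < S.card) :
    ∑ T ∈ S.powerset, (-1) ^ T.card * (c + ∑ i ∈ T, a i) ^ m = 0 := by
  induction S using Finset.induction_on generalizing m with
  | empty => simp at hm
  | insert w S hw ih =>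
    rw [card_insert_of_notMem hw] at hm
    have hlower : ∀ k ∈ range m, ∑ T ∈ S.powerset, (-1) ^ T.card * (c + ∑ i ∈ T, a i) ^ k = 0 :=
      fun k hk => ih (by simp at hk; omega)
    have hshift : ∀ T ∈ S.powerset,
        (-1) ^ (insert w T).card * (c + ∑ i ∈ insert w T, a i) ^ m =
          -∑ k ∈ range (m + 1),
            (-1) ^ T.card * (c + ∑ i ∈ T, a i) ^ k * (a w ^ (m - k) * m.choose k) := by
      intro T hT
      have hwT : w ∉ T := fun h => hw (mem_powerset.1 hT h)
      rw [card_insert_of_notMem hwT, sum_insert hwT,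
        show c + (a w + ∑ i ∈ T, a i) = (c + ∑ i ∈ T, a i) + a w by ring, add_pow, mul_sum,
        ← sum_neg_distrib]
      exact sum_congr rfl fun k _ => by ring
    have hlower_sum : ∑ k ∈ range m, ∑ T ∈ S.powerset,
        (-1) ^ T.card * (c + ∑ i ∈ T, a i) ^ k * (a w ^ (m - k) * m.choose k) = 0 :=
      sum_eq_zero fun k hk => by rw [← sum_mul, hlower k hk, zero_mul]
    rw [sum_powerset_insert hw, sum_congr rfl hshift, sum_neg_distrib, sum_comm, sum_range_succ,
      hlower_sum]
    simp

theorem Finset.disjoint_insert_sdiff {v : α} {S : Finset α} (hv : v ∉ S) (T : Finset α) :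
    Disjoint (insert v T) (S \ T) :=
  disjoint_insert_left.2 ⟨fun h => hv (mem_sdiff.1 h).1, disjoint_sdiff⟩

end Powerset

section Hurwitz

variable {α R : Type*} [DecidableEq α] [CommRing R]

-- `y (y + ∑_T a)^{|T|-1}` enumerates the rooted forests on `T`, weighting each root by `y` and
-- each vertex `i` by `a i` per child; the empty forest has weight `1`, not the formula's `y`.
def forestWeight (a : α → R) (y : R) (T : Finset α) : R :=
  if T = ∅ then 1 else y * (y + ∑ i ∈ T, a i) ^ (T.card - 1)

theorem forestWeight_empty (a : α → R) (y : R) : forestWeight a y ∅ = 1 := if_pos rfl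

theorem forestWeight_of_nonempty (a : α → R) (y : R) {T : Finset α} (hT : T.Nonempty) :
    forestWeight a y T = y * (y + ∑ i ∈ T, a i) ^ (T.card - 1) :=
  if_neg hT.ne_empty

-- The shift `x` lets the induction hypothesis be used at `x + a w` without composing polynomials.
noncomputable def hurwitzPoly (a : α → R) (y x : R) (S : Finset α) : R[X] :=
  ∑ T ∈ S.powerset, (X + C (x + ∑ i ∈ T, a i)) ^ T.card * C (forestWeight a y (S \ T))

theorem derivative_hurwitzPoly (a : α → R) (y x : R) (S : Finset α) :
    derivative (hurwitzPoly a y x S) = ∑ w ∈ S, hurwitzPoly a y (x + a w) (S.erase w) := by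
  have hterm : ∀ T ∈ S.powerset,
      derivative ((X + C (x + ∑ i ∈ T, a i)) ^ T.card * C (forestWeight a y (S \ T))) =
        T.card • ((X + C (x + ∑ i ∈ T, a i)) ^ (T.card - 1) * C (forestWeight a y (S \ T))) := by
    intro T _
    rw [derivative_mul, derivative_C, mul_zero, add_zero, derivative_X_add_C_pow, C_eq_natCast,
      nsmul_eq_mul, mul_assoc]
  rw [hurwitzPoly, derivative_sum, sum_congr rfl hterm, sum_powerset_card_nsmul]
  refine sum_congr rfl fun w hw => sum_congr rfl fun T hT => ?_
  have hwT : w ∉ T := fun h => (mem_erase.1 (mem_powerset.1 hT h)).1 rfl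
  rw [card_insert_of_notMem hwT, sum_insert hwT, Nat.add_sub_cancel, add_assoc,
    sdiff_insert, erase_sdiff_comm]

theorem sum_powerset_neg_pow_mul_forestWeight (a : α → R) (y : R) {S : Finset α}
    (hS : S.Nonempty) :
    ∑ T ∈ S.powerset, (-(y + ∑ i ∈ S \ T, a i)) ^ T.card * forestWeight a y (S \ T) = 0 := by
  have hterm : ∀ T ∈ S.powerset,
      (-(y + ∑ i ∈ S \ T, a i)) ^ T.card * forestWeight a y (S \ T) =
        y * ((-1) ^ T.card * ((y + ∑ i ∈ S, a i) + ∑ i ∈ T, -a i) ^ (S.card - 1)) := by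
    intro T hT
    have hTS := mem_powerset.1 hT
    have hcompl : y + ∑ i ∈ S \ T, a i = (y + ∑ i ∈ S, a i) + ∑ i ∈ T, -a i := by
      rw [← sum_sdiff hTS, sum_neg_distrib]; ring
    rw [hcompl, neg_pow]
    rcases (S \ T).eq_empty_or_nonempty with hST | hST
    · have hT : T = S := hTS.antisymm (sdiff_eq_empty_iff_subset.1 hST)
      subst hT
      obtain ⟨k, hk⟩ := Nat.exists_eq_add_one_of_ne_zero hS.card_pos.ne'
      rw [hST, forestWeight_empty, sum_neg_distrib, add_neg_cancel_right, hk, Nat.add_sub_cancel,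
        pow_succ']
      ring
    · rw [forestWeight_of_nonempty a y hST, hcompl, ← card_sdiff_add_card_eq_card hTS]
      obtain ⟨k, hk⟩ := Nat.exists_eq_add_one_of_ne_zero hST.card_pos.ne'
      rw [hk, Nat.add_right_comm, Nat.add_sub_cancel, Nat.add_sub_cancel, pow_add]
      ring
  rw [sum_congr rfl hterm, ← mul_sum,
    sum_powerset_neg_one_pow_card_mul_pow_eq_zero _ _ (Nat.sub_lt hS.card_pos one_pos), mul_zero]

variable [IsAddTorsionFree R]

theorem hurwitzPoly_eq (a : α → R) (y x : R) (S : Finset α) :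
    hurwitzPoly a y x S = (X + C (x + y + ∑ i ∈ S, a i)) ^ S.card := by
  induction S using Finset.strongInduction generalizing x with
  | H S ih =>
  rcases S.eq_empty_or_nonempty with rfl | hS
  · simp [hurwitzPoly, forestWeight_empty]
  refine eq_of_derivative_eq_of_eval_eq (-(x + y + ∑ i ∈ S, a i)) ?_ ?_
  · have hshift : ∀ w ∈ S, hurwitzPoly a y (x + a w) (S.erase w) =
        (X + C (x + y + ∑ i ∈ S, a i)) ^ (S.card - 1) := by
      intro w hw
      rw [ih _ (erase_ssubset hw), card_erase_of_mem hw, ← add_sum_erase S a hw]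
      ring_nf
    rw [derivative_hurwitzPoly, sum_congr rfl hshift, sum_const, derivative_X_add_C_pow,
      C_eq_natCast, nsmul_eq_mul]
  · have hvalue : ∀ T ∈ S.powerset,
        -(x + y + ∑ i ∈ S, a i) + (x + ∑ i ∈ T, a i) = -(y + ∑ i ∈ S \ T, a i) := by
      intro T hT
      rw [← sum_sdiff (mem_powerset.1 hT)]; ring
    simp only [hurwitzPoly, eval_finsetSum, eval_mul, eval_pow, eval_add, eval_X, eval_C]
    rw [sum_congr rfl fun T hT => by rw [hvalue T hT], neg_add_cancel,
      sum_powerset_neg_pow_mul_forestWeight a y hS, zero_pow hS.card_pos.ne']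

theorem sum_powerset_add_pow_mul_forestWeight (a : α → R) (x y : R) (S : Finset α) :
    ∑ T ∈ S.powerset, (x + ∑ i ∈ T, a i) ^ T.card * forestWeight a y (S \ T) =
      (x + y + ∑ i ∈ S, a i) ^ S.card := by
  simpa [hurwitzPoly, eval_finsetSum] using congrArg (eval 0) (hurwitzPoly_eq a y x S)

end Hurwitz

section SetPartition

variable {α : Type*} [DecidableEq α]

namespace IsSetPartition

variable {S : Finset α} {P : Finset (Finset α)} {B B' : Finset α} {x : α}

theorem subset_of_mem (hP : IsSetPartition S P) (hB : B ∈ P) : B ⊆ S :=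
  hP.2.2 ▸ le_sup (f := id) hB

theorem exists_mem (hP : IsSetPartition S P) (hx : x ∈ S) : ∃ B ∈ P, x ∈ B := by
  rw [← hP.2.2] at hx
  simpa using mem_sup.1 hx

theorem eq_of_mem_of_mem (hP : IsSetPartition S P) (hB : B ∈ P) (hB' : B' ∈ P) (hxB : x ∈ B)
    (hxB' : x ∈ B') : B = B' := by
  by_contra h
  exact disjoint_left.1 (hP.2.1 B hB B' hB' h) hxB hxB'

theorem notMem_of_disjoint (hP : IsSetPartition S P) (hB : B.Nonempty) (hBS : Disjoint B S) :
    B ∉ P := fun hBP =>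
  hB.ne_empty (disjoint_self.1 (hBS.mono_right (hP.subset_of_mem hBP)))

theorem erase (hP : IsSetPartition S P) (hB : B ∈ P) : IsSetPartition (S \ B) (P.erase B) := by
  refine ⟨fun B' hB' => hP.1 B' (mem_of_mem_erase hB'),
    fun B₁ h₁ B₂ h₂ => hP.2.1 B₁ (mem_of_mem_erase h₁) B₂ (mem_of_mem_erase h₂), ?_⟩
  have hsplit : S = B ∪ (P.erase B).sup id := by
    rw [← hP.2.2]
    conv_lhs => rw [← insert_erase hB]
    rw [sup_insert]
    rfl
  have hdisj : Disjoint ((P.erase B).sup id) B := Finset.disjoint_sup_left.2 fun B' hB' =>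
    hP.2.1 B' (mem_of_mem_erase hB') B hB (ne_of_mem_erase hB')
  rw [hsplit, union_sdiff_left, sdiff_eq_self_of_disjoint hdisj]

theorem insert (hP : IsSetPartition S P) (hB : B.Nonempty) (hBS : Disjoint B S) :
    IsSetPartition (B ∪ S) (insert B P) := by
  have hdisj : ∀ B' ∈ P, Disjoint B B' := fun B' hB' => hBS.mono_right (hP.subset_of_mem hB')
  refine ⟨?_, ?_, by rw [sup_insert, hP.2.2]; rfl⟩
  · simpa using ⟨hB, hP.1⟩
  · simp only [mem_insert]
    rintro B₁ (rfl | h₁) B₂ (rfl | h₂) hne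
    exacts [absurd rfl hne, hdisj B₂ h₂, (hdisj B₁ h₁).symm, hP.2.1 B₁ h₁ B₂ h₂ hne]

end IsSetPartition

theorem mem_partitionsOf [Fintype α] {S : Finset α} {P : Finset (Finset α)} :
    P ∈ partitionsOf S ↔ IsSetPartition S P := by
  simp [partitionsOf]

theorem partitionsOf_empty [Fintype α] : partitionsOf (∅ : Finset α) = {∅} := by
  ext P
  rw [mem_partitionsOf, mem_singleton]
  constructor
  · intro hP
    exact eq_empty_of_forall_notMem fun B hB =>
      (hP.1 B hB).ne_empty (subset_empty.1 (hP.subset_of_mem hB))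
  · rintro rfl
    exact ⟨by simp, by simp, by simp⟩

theorem sum_partitionsOf_insert [Fintype α] {M : Type*} [AddCommMonoid M] {v : α}
    {S : Finset α} (hv : v ∉ S) (f : Finset (Finset α) → M) :
    ∑ P ∈ partitionsOf (insert v S), f P =
      ∑ T ∈ S.powerset, ∑ Q ∈ partitionsOf (S \ T), f (insert (insert v T) Q) := by
  have hglue : ∀ p ∈ S.powerset.sigma fun T => partitionsOf (S \ T),
      IsSetPartition (insert v S) (insert (insert v p.1) p.2) ∧ insert v p.1 ∉ p.2 := by
    rintro ⟨T, Q⟩ hp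
    obtain ⟨hTS, hQ⟩ := mem_sigma.1 hp
    rw [mem_powerset] at hTS
    rw [mem_partitionsOf] at hQ
    have hglued := hQ.insert (insert_nonempty v T) (disjoint_insert_sdiff hv T)
    rw [insert_union, union_sdiff_of_subset hTS] at hglued
    exact ⟨hglued, hQ.notMem_of_disjoint (insert_nonempty v T) (disjoint_insert_sdiff hv T)⟩
  rw [sum_sigma']
  symm
  refine sum_bij (fun p _ => insert (insert v p.1) p.2)
    (fun p hp => mem_partitionsOf.2 (hglue p hp).1) ?_ ?_ fun _ _ => rfl
  · rintro ⟨T, Q⟩ hp ⟨T', Q'⟩ hp' heq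
    obtain ⟨hP, hvT⟩ := hglue _ hp
    obtain ⟨-, hvT'⟩ := hglue _ hp'
    dsimp only at heq hP hvT hvT'
    have hblock : insert v T = insert v T' := hP.eq_of_mem_of_mem (mem_insert_self _ _)
      (heq ▸ mem_insert_self _ _) (mem_insert_self v T) (mem_insert_self v T')
    have hT : T = T' := by
      have hvT₀ : v ∉ T := fun h => hv (mem_powerset.1 (mem_sigma.1 hp).1 h)
      have hvT₀' : v ∉ T' := fun h => hv (mem_powerset.1 (mem_sigma.1 hp').1 h)
      rw [← erase_insert hvT₀, hblock, erase_insert hvT₀']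
    subst hT
    have hQ : Q = Q' := by
      rw [← erase_insert hvT, heq, erase_insert hvT']
    rw [hQ]
  · intro P hP
    rw [mem_partitionsOf] at hP
    obtain ⟨B, hB, hvB⟩ := hP.exists_mem (mem_insert_self v S)
    have hBS : B.erase v ⊆ S := subset_insert_iff.1 (hP.subset_of_mem hB)
    have hrest : S \ B.erase v = insert v S \ B := by
      ext x
      by_cases hx : x = v <;> simp [hx, hvB, hv]
    refine ⟨⟨B.erase v, P.erase B⟩, mem_sigma.2 ⟨mem_powerset.2 hBS, ?_⟩, ?_⟩
    · rw [mem_partitionsOf, hrest]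
      exact hP.erase hB
    · simp only [insert_erase hvB, insert_erase hB]

end SetPartition

section PartitionPoly

variable {α R : Type*} [Fintype α] [DecidableEq α] [CommRing R]

noncomputable def partitionPoly (a : α → R) (U : Finset α) : R[X] :=
  ∑ P ∈ partitionsOf U, ∏ B ∈ P, X * C ((∑ b ∈ B, a b) ^ (B.card - 1))

theorem partitionPoly_empty (a : α → R) : partitionPoly a ∅ = 1 := by
  simp [partitionPoly, partitionsOf_empty]

theorem partitionPoly_insert (a : α → R) {v : α} {S : Finset α} (hv : v ∉ S) :
    partitionPoly a (insert v S) =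
      ∑ T ∈ S.powerset, X * C ((a v + ∑ i ∈ T, a i) ^ T.card) * partitionPoly a (S \ T) := by
  rw [partitionPoly, sum_partitionsOf_insert hv]
  refine sum_congr rfl fun T hT => ?_
  have hvT : v ∉ T := fun h => hv (mem_powerset.1 hT h)
  rw [partitionPoly, mul_sum]
  refine sum_congr rfl fun Q hQ => ?_
  rw [prod_insert ((mem_partitionsOf.1 hQ).notMem_of_disjoint (insert_nonempty v T)
      (disjoint_insert_sdiff hv T)), card_insert_of_notMem hvT, sum_insert hvT,
    Nat.add_sub_cancel]

theorem coeff_partitionPoly (a : α → R) (U : Finset α) (k : ℕ) :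
    (partitionPoly a U).coeff k =
      ∑ P ∈ partitionsOf U with P.card = k, ∏ B ∈ P, (∑ b ∈ B, a b) ^ (B.card - 1) := by
  simp only [partitionPoly, prod_mul_distrib, prod_const, ← map_prod, finsetSum_coeff, sum_filter]
  refine sum_congr rfl fun P _ => ?_
  rw [mul_comm, coeff_C_mul_X_pow]
  exact if_congr eq_comm rfl rfl

variable [IsAddTorsionFree R]

theorem partitionPoly_eq_forestWeight (a : α → R) (U : Finset α) :
    partitionPoly a U = forestWeight (fun i => C (a i)) X U := by
  induction U using Finset.strongInduction with
  | H U ih =>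
  rcases U.eq_empty_or_nonempty with rfl | ⟨v, hv⟩
  · rw [partitionPoly_empty, forestWeight_empty]
  set S := U.erase v
  have hvS : v ∉ S := notMem_erase v U
  have hU : U = insert v S := (insert_erase hv).symm
  have hpart : ∀ T ∈ S.powerset,
      partitionPoly a (S \ T) = forestWeight (fun i => C (a i)) X (S \ T) :=
    fun T _ => ih _ ((sdiff_subset).trans_ssubset (erase_ssubset hv))
  calc partitionPoly a U
      = X * ∑ T ∈ S.powerset, (C (a v) + ∑ i ∈ T, C (a i)) ^ T.card *
          forestWeight (fun i => C (a i)) X (S \ T) := by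
        rw [hU, partitionPoly_insert a hvS, mul_sum]
        refine sum_congr rfl fun T hT => ?_
        rw [hpart T hT, C_pow, C_add, map_sum, mul_assoc]
    _ = X * (C (a v) + X + ∑ i ∈ S, C (a i)) ^ S.card := by
        rw [sum_powerset_add_pow_mul_forestWeight]
    _ = forestWeight (fun i => C (a i)) X U := by
        rw [forestWeight_of_nonempty _ _ ⟨v, hv⟩, hU, sum_insert hvS, card_insert_of_notMem hvS,
          Nat.add_sub_cancel]
        ring

end PartitionPoly

open MvPolynomial

theorem partition_power_identity_card (n ℓ : ℕ) (hℓ : 0 < ℓ) (hℓn : ℓ < n) :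
    (((n - 1).choose (ℓ - 1) : MvPolynomial (Fin n) ℚ)) *
        (∑ i : Fin n, X i) ^ (n - ℓ) =
      ∑ P ∈ (partitionsOf (Finset.univ : Finset (Fin n))).filter
          (fun P => P.card = ℓ),
        ∏ B ∈ P, (∑ b ∈ B, X b) ^ (B.card - 1) := by
  obtain ⟨j, rfl⟩ : ∃ j, ℓ = j + 1 := ⟨ℓ - 1, by omega⟩
  have huniv : (univ : Finset (Fin n)).Nonempty := univ_nonempty_iff.2 ⟨⟨0, by omega⟩⟩
  rw [← coeff_partitionPoly, partitionPoly_eq_forestWeight, forestWeight_of_nonempty _ _ huniv,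
    Polynomial.coeff_X_mul, ← map_sum, Polynomial.coeff_X_add_C_pow, card_univ, Fintype.card_fin,
    mul_comm, Nat.add_sub_cancel, Nat.sub_sub, Nat.add_comm 1 j]
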